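/- arXiv:1510.00490 — 5 statements merged into one kernel-verified Lean document; each statement's English description precedes it below -/
import Mathlib

section
/- Fix ρ > 0, a nonempty closed convex set X ⊆ R^n, a convex continuous f : R^n → R, and an affine map h : R^n → R^m. Define the augmented Lagrangian L_ρ(x, λ) := f(x) + (ρ/2) d²(λ/ρ + h(x), R^m_−) − ‖λ‖²/(2ρ), and the dual function g_ρ(λ) := inf_{x ∈ X} L_ρ(x, λ). If x̃ ∈ X satisfies L_ρ(x̃, λ) ≤ g_ρ(λ) + α for some α ≥ 0, then ‖∇_λ L_ρ(x̃, λ) − ∇_λ g_ρ(λ)‖² ≤ 2α/ρ. -/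
/-!
Write `L_ρ(x, λ) = max_{ν ≥ 0} [f x + ⟪ν, A x + b⟫ - ‖ν - λ‖² / (2ρ)]`: the maximum is attained at
the multiplier update `ν(x, λ) = Π_{ℝᵐ₊}(λ + ρ (A x + b))` and the objective decays quadratically
away from it. Hence `L_ρ(x, ·)` is `(1/ρ)`-smooth and concave with gradient `(ν(x, λ) - λ) / ρ`.
Convexity in `x` together with the quadratic decay shows that the updates at an `α₁`- and an
`α₂`-minimizer of `L_ρ(·, λ)` differ by at most `√(2ρα₁) + √(2ρα₂)`. So the updates along a
minimizing sequence converge to some `ν*`, and every `α`-minimizer `x` satisfies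
`‖ν(x, λ) - ν*‖² ≤ 2ρα`. With the tangent bounds of `L_ρ(x, ·)` this makes the infimum `g_ρ`
differentiable at `λ` with gradient `(ν* - λ) / ρ`, and the claim is the estimate at `x̃`.
-/

open RealInnerProductSpace Filter Topology Asymptotics

theorem add_le_add_of_mul_sq_add_mul_sq_le {a b s t : ℝ} (ha : 0 < a) (hb : 0 < b) (hs : 0 ≤ s)
    (ht : 0 ≤ t) (h : b * s ^ 2 + a * t ^ 2 ≤ a * b * (a + b)) : s + t ≤ a + b := by
  -- Cauchy–Schwarz: `a * b * (s + t) ^ 2 ≤ (a + b) * (b * s ^ 2 + a * t ^ 2)`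
  have hcs : a * b * (s + t) ^ 2 ≤ a * b * (a + b) ^ 2 := by
    nlinarith [sq_nonneg (b * s - a * t)]
  exact (pow_le_pow_iff_left₀ (by positivity) (by positivity) two_ne_zero).1
    (le_of_mul_le_mul_left hcs (by positivity))

section Gradient

variable {E : Type*} [NormedAddCommGroup E] [InnerProductSpace ℝ E] [CompleteSpace E]

theorem hasGradientAt_of_abs_sub_inner_le {φ : E → ℝ} {v x : E} {C : ℝ}
    (h : ∀ y, |φ y - φ x - ⟪v, y - x⟫| ≤ C * ‖y - x‖ ^ 2) : HasGradientAt φ v x := by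
  rw [hasGradientAt_iff_isLittleO]
  have hsq : (fun y => ‖y - x‖ ^ 2) =o[𝓝 x] fun y => y - x :=
    (isLittleO_norm_pow_id one_lt_two).comp_tendsto (tendsto_sub_nhds_zero_iff.2 tendsto_id)
  refine (IsBigO.of_bound C (Eventually.of_forall fun y => ?_)).trans_isLittleO hsq
  simpa [Real.norm_eq_abs] using h y

theorem hasGradientAt_of_isGLB {ι : Type*} {S : Set ι} {F : ι → E → ℝ} {G : ι → E}
    {g : E → ℝ} {v x : E} {C K : ℝ} (hK : 0 < K) (hg : ∀ y, IsGLB ((F · y) '' S) (g y))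
    (hF : ∀ i ∈ S, ∀ y, |F i y - F i x - ⟪G i, y - x⟫| ≤ C * ‖y - x‖ ^ 2)
    (hG : ∀ i ∈ S, ‖G i - v‖ ^ 2 ≤ K * (F i x - g x)) :
    HasGradientAt g v x := by
  refine hasGradientAt_of_abs_sub_inner_le (C := C + K / 4) fun y => ?_
  set r := ‖y - x‖
  -- AM-GM trades the slope error `‖G i - v‖ * r` for the gap of `i` at `x`
  have hslope : ∀ i ∈ S, |⟪G i - v, y - x⟫| ≤ (F i x - g x) + K / 4 * r ^ 2 := by
    intro i hi
    have h1 := abs_real_inner_le_norm (G i - v) (y - x)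
    have h2 : ‖G i - v‖ * r ≤ ‖G i - v‖ ^ 2 / K + K / 4 * r ^ 2 := by
      rw [div_add' _ _ _ hK.ne', le_div_iff₀ hK]
      nlinarith [sq_nonneg (‖G i - v‖ - K / 2 * r)]
    have h3 := (div_le_iff₀' hK).2 (hG i hi)
    linarith
  have hupper : ∀ i ∈ S, g y - ⟪v, y - x⟫ - (C + K / 4) * r ^ 2 ≤ 2 * F i x - g x := by
    intro i hi
    have h1 := (hg y).1 ⟨i, hi, rfl⟩
    have h2 := (abs_le.1 (hF i hi y)).2
    have h3 := (abs_le.1 (hslope i hi)).2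
    rw [inner_sub_left] at h3
    linarith
  rw [abs_le]
  constructor
  · have : g x + ⟪v, y - x⟫ - (C + K / 4) * r ^ 2 ∈ lowerBounds ((F · y) '' S) := by
      rintro _ ⟨i, hi, rfl⟩
      have h1 := (hg x).1 ⟨i, hi, rfl⟩
      have h2 := (abs_le.1 (hF i hi y)).1
      have h3 := (abs_le.1 (hslope i hi)).1
      rw [inner_sub_left] at h3
      dsimp only
      linarith
    linarith [(hg y).2 this]
  · have : (g y - ⟪v, y - x⟫ - (C + K / 4) * r ^ 2 + g x) / 2 ∈ lowerBounds ((F · x) '' S) := by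
      rintro _ ⟨i, hi, rfl⟩
      linarith [hupper i hi]
    linarith [(hg x).2 this]

end Gradient

theorem exists_norm_sub_le_sqrt_of_norm_sub_le {E X : Type*} [SeminormedAddCommGroup E]
    [CompleteSpace E] {S : Set X} {δ : X → ℝ} {Γ : X → E} {κ : ℝ} (hδ : ∀ y ∈ S, 0 ≤ δ y)
    (hinf : ∀ ε > 0, ∃ y ∈ S, δ y < ε)
    (hΓ : ∀ y₁ ∈ S, ∀ y₂ ∈ S, ∀ α₁ α₂ : ℝ, 0 < α₁ → 0 < α₂ → δ y₁ ≤ α₁ → δ y₂ ≤ α₂ →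
      ‖Γ y₁ - Γ y₂‖ ≤ √(κ * α₁) + √(κ * α₂)) :
    ∃ v, ∀ y ∈ S, ‖Γ y - v‖ ≤ √(κ * δ y) := by
  set ε : ℕ → ℝ := fun k => 1 / ((k : ℝ) + 1)
  have hε0 : ∀ k, 0 < ε k := fun k => by positivity
  have hε : Tendsto ε atTop (𝓝 0) := tendsto_one_div_add_atTop_nhds_zero_nat
  have hsqrt : ∀ a : ℝ, Tendsto (fun k => √(κ * (a + ε k))) atTop (𝓝 √(κ * a)) := fun a => by
    simpa using ((tendsto_const_nhds (x := a)).add hε).const_mul κ |>.sqrt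
  choose y hyS hy using fun k => hinf (ε k) (hε0 k)
  have hcauchy : CauchySeq (Γ ∘ y) := by
    refine cauchySeq_of_le_tendsto_0 (fun N => 2 * √(κ * ε N)) (fun j k N hj hk => ?_)
      (by simpa using (hsqrt 0).const_mul 2)
    have hεj : ε j ≤ ε N := by dsimp only [ε]; gcongr
    have hεk : ε k ≤ ε N := by dsimp only [ε]; gcongr
    rw [dist_eq_norm, two_mul]
    exact hΓ _ (hyS j) _ (hyS k) _ _ (hε0 N) (hε0 N) (by linarith [hy j]) (by linarith [hy k])
  obtain ⟨v, hv⟩ := cauchySeq_tendsto_of_complete hcauchy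
  refine ⟨v, fun z hz => le_of_tendsto_of_tendsto' ((tendsto_const_nhds.sub hv).norm)
    (by simpa using (hsqrt (δ z)).add (hsqrt 0)) fun k => ?_⟩
  exact hΓ z hz (y k) (hyS k) _ _ (by linarith [hδ z hz, hε0 k]) (hε0 k)
    (by linarith [hε0 k]) (hy k).le

theorem norm_sub_le_sqrt_of_convexOn {V F : Type*} [AddCommGroup V] [Module ℝ V]
    [SeminormedAddCommGroup F] {X : Set V} {K : Set F} {ψ : V → F → ℝ} {M : V → F}
    {κ g α₁ α₂ : ℝ} {x₁ x₂ : V} (hψ : ∀ ν ∈ K, ConvexOn ℝ X (ψ · ν))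
    (hMK : ∀ x ∈ X, M x ∈ K) (hκ : 0 < κ)
    (hM : ∀ x ∈ X, ∀ ν ∈ K, ψ x ν + ‖ν - M x‖ ^ 2 / κ ≤ ψ x (M x))
    (hg : ∀ x ∈ X, g ≤ ψ x (M x)) (hx₁ : x₁ ∈ X) (hx₂ : x₂ ∈ X) (hα₁ : 0 < α₁) (hα₂ : 0 < α₂)
    (h₁ : ψ x₁ (M x₁) ≤ g + α₁) (h₂ : ψ x₂ (M x₂) ≤ g + α₂) :
    ‖M x₁ - M x₂‖ ≤ √(κ * α₁) + √(κ * α₂) := by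
  set a := √(κ * α₁)
  set b := √(κ * α₂)
  have ha : 0 < a := Real.sqrt_pos.2 (by positivity)
  have hb : 0 < b := Real.sqrt_pos.2 (by positivity)
  have ha2 : a ^ 2 = κ * α₁ := Real.sq_sqrt (by positivity)
  have hb2 : b ^ 2 = κ * α₂ := Real.sq_sqrt (by positivity)
  have hab : 0 < a + b := by positivity
  -- the weights `θ₁ : θ₂ = b : a` are the ones that balance the two error terms below
  set θ₁ := b / (a + b)
  set θ₂ := a / (a + b)
  have hθ₁ : 0 ≤ θ₁ := by positivity
  have hθ₂ : 0 ≤ θ₂ := by positivity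
  have hθ : θ₁ + θ₂ = 1 := by rw [← add_div, add_comm, div_self hab.ne']
  set x := θ₁ • x₁ + θ₂ • x₂
  have hx : x ∈ X := (hψ _ (hMK x₁ hx₁)).1 hx₁ hx₂ hθ₁ hθ₂ hθ
  set ν := M x
  have hν := hMK x hx
  set s := ‖ν - M x₁‖
  set t := ‖ν - M x₂‖
  have hweighted : θ₁ * (s ^ 2 / κ) + θ₂ * (t ^ 2 / κ) ≤ θ₁ * α₁ + θ₂ * α₂ := by
    have hconv : ψ x ν ≤ θ₁ * ψ x₁ ν + θ₂ * ψ x₂ ν := (hψ ν hν).2 hx₁ hx₂ hθ₁ hθ₂ hθ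
    have hgx : g = θ₁ * g + θ₂ * g := by rw [← add_mul, hθ, one_mul]
    nlinarith [mul_le_mul_of_nonneg_left (hM x₁ hx₁ ν hν) hθ₁,
      mul_le_mul_of_nonneg_left (hM x₂ hx₂ ν hν) hθ₂, hg x hx,
      mul_le_mul_of_nonneg_left h₁ hθ₁, mul_le_mul_of_nonneg_left h₂ hθ₂]
  have hst : s + t ≤ a + b := by
    refine add_le_add_of_mul_sq_add_mul_sq_le ha hb (norm_nonneg _) (norm_nonneg _) ?_
    simp only [θ₁, θ₂] at hweighted
    field_simp at hweighted
    nlinarith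
  calc ‖M x₁ - M x₂‖ ≤ ‖M x₁ - ν‖ + ‖ν - M x₂‖ := norm_sub_le_norm_sub_add_norm_sub _ _ _
    _ = s + t := by rw [norm_sub_rev]
    _ ≤ a + b := hst

section ProxPenalty

variable {F : Type*} [NormedAddCommGroup F] [InnerProductSpace ℝ F]

noncomputable def proxPenalty (ρ : ℝ) (c lam ν : F) : ℝ := ⟪ν, c⟫ - ‖ν - lam‖ ^ 2 / (2 * ρ)

-- Completing the square turns maximizing over `ν` into projecting `ρ⁻¹ • lam + c`.
theorem proxPenalty_eq {ρ : ℝ} (hρ : ρ ≠ 0) (c lam ν : F) :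
    proxPenalty ρ c lam ν =
      ρ / 2 * (‖ρ⁻¹ • lam + c‖ ^ 2 - ‖ρ⁻¹ • lam + c - ρ⁻¹ • ν‖ ^ 2) - ‖lam‖ ^ 2 / (2 * ρ) := by
  simp only [proxPenalty, norm_sub_sq_real, norm_add_sq_real, norm_smul, inner_add_left,
    inner_smul_left, inner_smul_right, Real.norm_eq_abs, mul_pow, sq_abs,
    real_inner_comm c, real_inner_comm lam ν, RCLike.conj_to_real]
  field_simp
  ring

theorem abs_proxPenalty_sub_le {ρ : ℝ} (hρ : 0 < ρ) {K : Set F} {c : F} {M : F → F}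
    (hMK : ∀ lam, M lam ∈ K)
    (hM : ∀ lam, ∀ ν ∈ K,
      proxPenalty ρ c lam ν + ‖ν - M lam‖ ^ 2 / (2 * ρ) ≤ proxPenalty ρ c lam (M lam))
    (lam μ : F) :
    |proxPenalty ρ c μ (M μ) - proxPenalty ρ c lam (M lam) - ⟪ρ⁻¹ • (M lam - lam), μ - lam⟫|
      ≤ (2 * ρ)⁻¹ * ‖μ - lam‖ ^ 2 := by
  -- test the maximization at `μ` with the maximizer at `lam`, and vice versa
  set d := μ - lam
  set u := M lam - lam
  set w := M μ - μ
  have hlower : ⟪M lam, c⟫ - ‖u - d‖ ^ 2 / (2 * ρ) ≤ ⟪M μ, c⟫ - ‖w‖ ^ 2 / (2 * ρ) := by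
    have := hM μ (M lam) (hMK lam)
    have e : M lam - μ = u - d := by simp only [u, d]; abel
    simp only [proxPenalty, e] at this
    linarith [div_nonneg (sq_nonneg ‖M lam - M μ‖) (by positivity : (0 : ℝ) ≤ 2 * ρ)]
  have hupper : ⟪M μ, c⟫ - ‖w + d‖ ^ 2 / (2 * ρ) + ‖(w - u) + d‖ ^ 2 / (2 * ρ)
      ≤ ⟪M lam, c⟫ - ‖u‖ ^ 2 / (2 * ρ) := by
    have := hM lam (M μ) (hMK μ)
    have e₁ : M μ - lam = w + d := by simp only [w, d]; abel
    have e₂ : M μ - M lam = (w - u) + d := by simp only [u, w, d]; abel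
    simpa only [proxPenalty, e₁, e₂] using this
  show |(⟪M μ, c⟫ - ‖w‖ ^ 2 / (2 * ρ)) - (⟪M lam, c⟫ - ‖u‖ ^ 2 / (2 * ρ)) - ⟪ρ⁻¹ • u, d⟫|
    ≤ (2 * ρ)⁻¹ * ‖d‖ ^ 2
  clear_value d u w
  rw [norm_sub_sq_real] at hlower
  rw [norm_add_sq_real, norm_add_sq_real, inner_sub_left] at hupper
  have hk : ρ⁻¹ = 2 * (2 * ρ)⁻¹ := by field_simp
  have hwu : 0 ≤ ‖w - u‖ ^ 2 * (2 * ρ)⁻¹ := by positivity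
  have hd : 0 ≤ ‖d‖ ^ 2 * (2 * ρ)⁻¹ := by positivity
  simp only [div_eq_mul_inv] at hlower hupper
  rw [real_inner_smul_left, hk, abs_le, div_eq_mul_inv, div_eq_mul_inv]
  constructor <;> linarith

end ProxPenalty

section Orthant

variable {ι : Type*}

noncomputable def nonnegProj (y : EuclideanSpace ℝ ι) : EuclideanSpace ℝ ι :=
  WithLp.toLp 2 fun i => max (y i) 0

@[simp]
theorem nonnegProj_apply (y : EuclideanSpace ℝ ι) (i : ι) : nonnegProj y i = max (y i) 0 := rfl

theorem norm_nonnegProj_sq_add_norm_sub_sq [Fintype ι] (y : EuclideanSpace ℝ ι) :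
    ‖nonnegProj y‖ ^ 2 + ‖y - nonnegProj y‖ ^ 2 = ‖y‖ ^ 2 := by
  simp only [EuclideanSpace.real_norm_sq_eq, ← Finset.sum_add_distrib]
  refine Finset.sum_congr rfl fun i _ => ?_
  simp only [PiLp.sub_apply, nonnegProj_apply]
  rcases le_total (y i) 0 with h | h <;> simp [h]

theorem norm_sub_nonnegProj_sq_add_le [Fintype ι] {y w : EuclideanSpace ℝ ι} (hw : ∀ i, 0 ≤ w i) :
    ‖y - nonnegProj y‖ ^ 2 + ‖w - nonnegProj y‖ ^ 2 ≤ ‖y - w‖ ^ 2 := by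
  simp only [EuclideanSpace.real_norm_sq_eq, ← Finset.sum_add_distrib]
  refine Finset.sum_le_sum fun i _ => ?_
  simp only [PiLp.sub_apply, nonnegProj_apply]
  rcases le_total (y i) 0 with h | h
  · simp only [max_eq_right h]; nlinarith [hw i]
  · simp only [max_eq_left h]; nlinarith

theorem infDist_nonpos_eq_norm_nonnegProj [Fintype ι] (y : EuclideanSpace ℝ ι) :
    Metric.infDist y {v | ∀ i, v i ≤ 0} = ‖nonnegProj y‖ := by
  have hmem : y - nonnegProj y ∈ {v : EuclideanSpace ℝ ι | ∀ i, v i ≤ 0} := fun i => by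
    simp
  refine le_antisymm ?_ ((Metric.le_infDist ⟨_, hmem⟩).2 fun z hz => ?_)
  · exact (Metric.infDist_le_dist_of_mem hmem).trans_eq (by rw [dist_eq_norm, sub_sub_cancel])
  · rw [dist_eq_norm, ← pow_le_pow_iff_left₀ (norm_nonneg _) (norm_nonneg _) two_ne_zero]
    simp only [EuclideanSpace.real_norm_sq_eq]
    refine Finset.sum_le_sum fun i _ => ?_
    simp only [PiLp.sub_apply, nonnegProj_apply]
    rcases le_total (y i) 0 with h | h
    · simp only [max_eq_right h]; nlinarith [sq_nonneg (y i - z i)]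
    · simp only [max_eq_left h]; nlinarith [hz i]

noncomputable def multiplierUpdate (ρ : ℝ) (c lam : EuclideanSpace ℝ ι) : EuclideanSpace ℝ ι :=
  ρ • nonnegProj (ρ⁻¹ • lam + c)

theorem multiplierUpdate_nonneg {ρ : ℝ} (hρ : 0 ≤ ρ) (c lam : EuclideanSpace ℝ ι) (i : ι) :
    0 ≤ multiplierUpdate ρ c lam i := by
  simp only [multiplierUpdate, PiLp.smul_apply, nonnegProj_apply, smul_eq_mul]
  positivity

theorem penalty_eq_proxPenalty_multiplierUpdate [Fintype ι] {ρ : ℝ} (hρ : 0 < ρ)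
    (c lam : EuclideanSpace ℝ ι) :
    ρ / 2 * Metric.infDist (ρ⁻¹ • lam + c) {v | ∀ i, v i ≤ 0} ^ 2 - ‖lam‖ ^ 2 / (2 * ρ)
      = proxPenalty ρ c lam (multiplierUpdate ρ c lam) := by
  rw [proxPenalty_eq hρ.ne', multiplierUpdate, inv_smul_smul₀ hρ.ne',
    infDist_nonpos_eq_norm_nonnegProj, ← norm_nonnegProj_sq_add_norm_sub_sq (ρ⁻¹ • lam + c)]
  ring

theorem proxPenalty_add_le_multiplierUpdate [Fintype ι] {ρ : ℝ} (hρ : 0 < ρ)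
    {c lam ν : EuclideanSpace ℝ ι} (hν : ∀ i, 0 ≤ ν i) :
    proxPenalty ρ c lam ν + ‖ν - multiplierUpdate ρ c lam‖ ^ 2 / (2 * ρ)
      ≤ proxPenalty ρ c lam (multiplierUpdate ρ c lam) := by
  set y := ρ⁻¹ • lam + c
  have hw : ∀ i, 0 ≤ (ρ⁻¹ • ν) i := fun i => by
    simpa using mul_nonneg (inv_nonneg.2 hρ.le) (hν i)
  have hpyth := norm_sub_nonnegProj_sq_add_le (y := y) hw
  have hscale : ‖ν - multiplierUpdate ρ c lam‖ = ρ * ‖ρ⁻¹ • ν - nonnegProj y‖ := by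
    rw [multiplierUpdate, ← norm_smul_of_nonneg hρ.le, smul_sub, smul_inv_smul₀ hρ.ne']
  have hsq : (ρ * ‖ρ⁻¹ • ν - nonnegProj y‖) ^ 2 / (2 * ρ)
      = ρ / 2 * ‖ρ⁻¹ • ν - nonnegProj y‖ ^ 2 := by
    field_simp
  rw [hscale, hsq, proxPenalty_eq hρ.ne', proxPenalty_eq hρ.ne', multiplierUpdate,
    inv_smul_smul₀ hρ.ne']
  nlinarith

end Orthant

section AugmentedLagrangian

variable {V ι : Type*} [Fintype ι] {ρ : ℝ}

noncomputable def augLagrangian (ρ : ℝ) (f : V → ℝ) (c : V → EuclideanSpace ℝ ι) (x : V)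
    (lam : EuclideanSpace ℝ ι) : ℝ :=
  f x + proxPenalty ρ (c x) lam (multiplierUpdate ρ (c x) lam)

theorem augLagrangian_eq (hρ : 0 < ρ) (f : V → ℝ) (c : V → EuclideanSpace ℝ ι) (x : V)
    (lam : EuclideanSpace ℝ ι) :
    augLagrangian ρ f c x lam = f x +
      ρ / 2 * Metric.infDist (ρ⁻¹ • lam + c x) {v | ∀ i, v i ≤ 0} ^ 2 - ‖lam‖ ^ 2 / (2 * ρ) := by
  rw [augLagrangian, add_sub_assoc, penalty_eq_proxPenalty_multiplierUpdate hρ]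

theorem abs_augLagrangian_sub_le (hρ : 0 < ρ) (f : V → ℝ) (c : V → EuclideanSpace ℝ ι) (x : V)
    (lam μ : EuclideanSpace ℝ ι) :
    |augLagrangian ρ f c x μ - augLagrangian ρ f c x lam
        - ⟪ρ⁻¹ • (multiplierUpdate ρ (c x) lam - lam), μ - lam⟫| ≤ (2 * ρ)⁻¹ * ‖μ - lam‖ ^ 2 := by
  rw [augLagrangian, augLagrangian, add_sub_add_left_eq_sub]
  exact abs_proxPenalty_sub_le hρ (multiplierUpdate_nonneg hρ.le _)
    (fun _ _ hν => proxPenalty_add_le_multiplierUpdate hρ hν) lam μ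

variable [AddCommGroup V] [Module ℝ V] {X : Set V} {f : V → ℝ} {c : V → EuclideanSpace ℝ ι}
  {lam : EuclideanSpace ℝ ι} {γ : ℝ}

theorem norm_multiplierUpdate_sub_le (hρ : 0 < ρ) (hf : ConvexOn ℝ X f)
    (hc : ∀ ν : EuclideanSpace ℝ ι, (∀ i, 0 ≤ ν i) → ConvexOn ℝ X fun x => ⟪ν, c x⟫)
    (hγ : ∀ x ∈ X, γ ≤ augLagrangian ρ f c x lam) {x₁ x₂ : V} {α₁ α₂ : ℝ} (hx₁ : x₁ ∈ X)
    (hx₂ : x₂ ∈ X) (hα₁ : 0 < α₁) (hα₂ : 0 < α₂) (h₁ : augLagrangian ρ f c x₁ lam ≤ γ + α₁)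
    (h₂ : augLagrangian ρ f c x₂ lam ≤ γ + α₂) :
    ‖multiplierUpdate ρ (c x₁) lam - multiplierUpdate ρ (c x₂) lam‖
      ≤ √(2 * ρ * α₁) + √(2 * ρ * α₂) := by
  refine norm_sub_le_sqrt_of_convexOn (ψ := fun x ν => f x + proxPenalty ρ (c x) lam ν)
    (K := {ν | ∀ i, 0 ≤ ν i}) (M := fun x => multiplierUpdate ρ (c x) lam) (κ := 2 * ρ)
    (fun ν hν => ?_) (fun x _ => multiplierUpdate_nonneg hρ.le _ _)
    (by positivity) (fun x _ ν hν => ?_) hγ hx₁ hx₂ hα₁ hα₂ h₁ h₂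
  · refine (hf.add ((hc ν hν).add_const (-(‖ν - lam‖ ^ 2 / (2 * ρ))))).congr fun x _ => ?_
    simp only [proxPenalty, Pi.add_apply, sub_eq_add_neg]
  · have := proxPenalty_add_le_multiplierUpdate hρ (c := c x) (lam := lam) hν
    linarith

theorem exists_norm_slope_sub_sq_le (hρ : 0 < ρ) (hf : ConvexOn ℝ X f)
    (hc : ∀ ν : EuclideanSpace ℝ ι, (∀ i, 0 ≤ ν i) → ConvexOn ℝ X fun x => ⟪ν, c x⟫)
    (hg : IsGLB ((augLagrangian ρ f c · lam) '' X) γ) :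
    ∃ v, ∀ x ∈ X, ‖ρ⁻¹ • (multiplierUpdate ρ (c x) lam - lam) - v‖ ^ 2
      ≤ 2 / ρ * (augLagrangian ρ f c x lam - γ) := by
  have hgap : ∀ x ∈ X, 0 ≤ augLagrangian ρ f c x lam - γ := fun x hx =>
    sub_nonneg.2 (hg.1 ⟨x, hx, rfl⟩)
  have hinf : ∀ ε > 0, ∃ x ∈ X, augLagrangian ρ f c x lam - γ < ε := fun ε hε => by
    obtain ⟨_, ⟨x, hx, rfl⟩, -, hlt⟩ := hg.exists_between (lt_add_of_pos_right _ hε)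
    exact ⟨x, hx, by linarith⟩
  obtain ⟨w, hw⟩ := exists_norm_sub_le_sqrt_of_norm_sub_le hgap hinf
    fun x₁ hx₁ x₂ hx₂ α₁ α₂ hα₁ hα₂ h₁ h₂ =>
      norm_multiplierUpdate_sub_le hρ hf hc (fun x hx => hg.1 ⟨x, hx, rfl⟩) hx₁ hx₂ hα₁ hα₂
        (by linarith) (by linarith)
  refine ⟨ρ⁻¹ • (w - lam), fun x hx => ?_⟩
  have hsq := pow_le_pow_left₀ (norm_nonneg _) (hw x hx) 2
  rw [Real.sq_sqrt (mul_nonneg (by positivity) (hgap x hx))] at hsq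
  rw [← smul_sub, sub_sub_sub_cancel_right, norm_smul_of_nonneg (inv_nonneg.2 hρ.le), mul_pow]
  calc ρ⁻¹ ^ 2 * ‖multiplierUpdate ρ (c x) lam - w‖ ^ 2
      ≤ ρ⁻¹ ^ 2 * (2 * ρ * (augLagrangian ρ f c x lam - γ)) := by gcongr
    _ = 2 / ρ * (augLagrangian ρ f c x lam - γ) := by field_simp

end AugmentedLagrangian

theorem inexact_dual_gradient_bound_general (n m : ℕ) (ρ : ℝ) (hρ : 0 < ρ)
    (X : Set (EuclideanSpace ℝ (Fin n)))
    (hXconv : Convex ℝ X)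
    (f : EuclideanSpace ℝ (Fin n) → ℝ) (hfconv : ConvexOn ℝ Set.univ f)
    (A : EuclideanSpace ℝ (Fin n) →L[ℝ] EuclideanSpace ℝ (Fin m))
    (b : EuclideanSpace ℝ (Fin m))
    (L : EuclideanSpace ℝ (Fin n) → EuclideanSpace ℝ (Fin m) → ℝ)
    (hL : ∀ x lam, L x lam = f x +
      ρ / 2 * (Metric.infDist (ρ⁻¹ • lam + (A x + b))
        {v : EuclideanSpace ℝ (Fin m) | ∀ i, v i ≤ 0}) ^ 2 - ‖lam‖ ^ 2 / (2 * ρ))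
    (gρ : EuclideanSpace ℝ (Fin m) → ℝ)
    (hg : ∀ lam, IsGLB ((fun x => L x lam) '' X) (gρ lam))
    (xt : EuclideanSpace ℝ (Fin n)) (hxt : xt ∈ X)
    (α : ℝ) (lam : EuclideanSpace ℝ (Fin m))
    (hinexact : L xt lam ≤ gρ lam + α) :
    ‖gradient (fun l => L xt l) lam - gradient gρ lam‖ ^ 2 ≤ 2 * α / ρ := by
  obtain rfl : L = augLagrangian ρ f fun x => A x + b :=
    funext₂ fun x μ => by rw [hL, augLagrangian_eq hρ]
  have hc (ν : EuclideanSpace ℝ (Fin m)) : ConvexOn ℝ X fun x => ⟪ν, A x + b⟫ :=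
    ((((innerSL ℝ ν).comp A).toLinearMap.convexOn hXconv).add_const ⟪ν, b⟫).congr fun x _ => by
      simp [inner_add_right]
  obtain ⟨v, hv⟩ := exists_norm_slope_sub_sq_le hρ (hfconv.subset (Set.subset_univ X) hXconv)
    (fun ν _ => hc ν) (hg lam)
  have htangent := fun x => abs_augLagrangian_sub_le hρ f (fun x => A x + b) x lam
  have hgrad := hasGradientAt_of_isGLB (by positivity : (0 : ℝ) < 2 / ρ) hg
    (fun x _ => htangent x) hv
  rw [(hasGradientAt_of_abs_sub_inner_le (htangent xt)).gradient, hgrad.gradient]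
  calc _ ≤ 2 / ρ * (augLagrangian ρ f (fun x => A x + b) xt lam - gρ lam) := hv xt hxt
    _ ≤ 2 * α / ρ := by rw [div_mul_eq_mul_div]; gcongr; linarith

/-- If `x̃ ∈ X` minimizes the augmented Lagrangian `L_ρ(·, λ)` over `X` within accuracy `α`,
then `‖∇_λ L_ρ(x̃, λ) − ∇_λ g_ρ(λ)‖² ≤ 2α/ρ`, where `g_ρ(λ) = inf_{x∈X} L_ρ(x, λ)`. -/
theorem inexact_dual_gradient_bound (n m : ℕ) (ρ : ℝ) (hρ : 0 < ρ)
    (X : Set (EuclideanSpace ℝ (Fin n))) (hXne : X.Nonempty) (hXcl : IsClosed X)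
    (hXconv : Convex ℝ X)
    (f : EuclideanSpace ℝ (Fin n) → ℝ) (hfconv : ConvexOn ℝ Set.univ f)
    (hfcont : Continuous f)
    (A : EuclideanSpace ℝ (Fin n) →L[ℝ] EuclideanSpace ℝ (Fin m))
    (b : EuclideanSpace ℝ (Fin m))
    (L : EuclideanSpace ℝ (Fin n) → EuclideanSpace ℝ (Fin m) → ℝ)
    (hL : ∀ x lam, L x lam = f x +
      ρ / 2 * (Metric.infDist (ρ⁻¹ • lam + (A x + b))
        {v : EuclideanSpace ℝ (Fin m) | ∀ i, v i ≤ 0}) ^ 2 - ‖lam‖ ^ 2 / (2 * ρ))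
    (gρ : EuclideanSpace ℝ (Fin m) → ℝ)
    (hg : ∀ lam, IsGLB ((fun x => L x lam) '' X) (gρ lam))
    (xt : EuclideanSpace ℝ (Fin n)) (hxt : xt ∈ X)
    (α : ℝ) (hα : 0 ≤ α) (lam : EuclideanSpace ℝ (Fin m))
    (hinexact : L xt lam ≤ gρ lam + α) :
    ‖gradient (fun l => L xt l) lam - gradient gρ lam‖ ^ 2 ≤ 2 * α / ρ :=
  inexact_dual_gradient_bound_general n m ρ hρ X hXconv f hfconv A b L hL gρ hg xt hxt α lam
    hinexact
end

section
/- Consider Algorithm: λ_{k+1} = λ_k + ρ u_k, where ρ > 0, λ₀ = 0, and u_k satisfies ‖u_k − ∇g_ρ(λ_k;θ_k)‖ ≤ √(2α_k/ρ). Assume: (a) g_ρ(·;θ) is concave differentiable with ∇g_ρ (1/ρ)-Lipschitz in λ for each θ; (b) ‖∇g_ρ(λ;θ₁) − ∇g_ρ(λ;θ₂)‖ ≤ M‖θ₁ − θ₂‖ for all λ; (c) λ* maximizes g_ρ(·;θ*), so the proximal map π_ρ(·;θ*) := (·) + ρ∇g_ρ(·;θ*) is nonexpansive and fixes λ*; (d)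 ‖θ_k − θ*‖ ≤ q^k‖θ₀ − θ*‖ with q ∈ (0,1); (e) Σ√α_k < ∞. Then for all k ≥ 1, ‖λ_k − λ*‖ ≤ √(2ρ) Σ_{i=0}^∞ √α_i + ρM‖θ₀ − θ*‖/(1 − q) + ‖λ*‖. -/
/-!
The iteration `λ ↦ λ + ρ u` is an inexact evaluation of the prox map `π = id + ρ ∇g_ρ(·; θ*)`,
which is nonexpansive and fixes `λ*`. The error `‖λ_{k+1} − π λ_k‖` is at most
`ρ ‖u_k − ∇g_ρ(λ_k; θ_k)‖ + ρ ‖∇g_ρ(λ_k; θ_k) − ∇g_ρ(λ_k; θ*)‖ ≤ √(2ρα_k) + ρ M q^k ‖θ₀ − θ*‖`,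
so by the triangle inequality through `π λ_k` the distance to `λ*` grows by at most this much per
step. Summing, and bounding the partial sums by `Σ √α_i` and `1 / (1 − q)`, gives the claim
since `‖λ₀ − λ*‖ = ‖λ*‖`.
-/

open Finset

theorem le_add_sum_range_of_succ_le_add {a e : ℕ → ℝ} (h : ∀ k, a (k + 1) ≤ a k + e k) (k : ℕ) :
    a k ≤ a 0 + ∑ i ∈ range k, e i := by
  induction k with
  | zero => simp
  | succ n ih => rw [sum_range_succ]; linarith [h n]

section PerturbedFixedPointIteration

variable {E : Type*} [NormedAddCommGroup E] {T : E → E} {xs : E}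

theorem norm_succ_sub_fixedPoint_le (hT : ∀ x y, ‖T x - T y‖ ≤ ‖x - y‖) (hfix : T xs = xs)
    (x y : E) : ‖y - xs‖ ≤ ‖x - xs‖ + ‖y - T x‖ :=
  calc ‖y - xs‖ = ‖(T x - T xs) + (y - T x)‖ := by rw [hfix]; abel_nf
    _ ≤ ‖T x - T xs‖ + ‖y - T x‖ := norm_add_le _ _
    _ ≤ ‖x - xs‖ + ‖y - T x‖ := by gcongr; exact hT x xs

theorem norm_iterate_sub_fixedPoint_le (hT : ∀ x y, ‖T x - T y‖ ≤ ‖x - y‖) (hfix : T xs = xs)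
    {x : ℕ → E} {e : ℕ → ℝ} (he : ∀ k, ‖x (k + 1) - T (x k)‖ ≤ e k) (k : ℕ) :
    ‖x k - xs‖ ≤ ‖x 0 - xs‖ + ∑ i ∈ range k, e i :=
  le_add_sum_range_of_succ_le_add (a := fun k => ‖x k - xs‖)
    (fun k => (norm_succ_sub_fixedPoint_le hT hfix _ _).trans (by gcongr; exact he k)) k

end PerturbedFixedPointIteration

theorem Real.mul_sqrt_div_self {ρ : ℝ} (hρ : 0 ≤ ρ) (x : ℝ) : ρ * √(x / ρ) = √(ρ * x) := by
  rcases hρ.eq_or_lt with rfl | hρ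
  · simp
  · rw [← Real.sqrt_sq hρ.le, ← Real.sqrt_mul (sq_nonneg ρ), Real.sqrt_sq hρ.le]
    congr 1
    field_simp

theorem norm_add_smul_sub_add_smul_le {E : Type*} [NormedAddCommGroup E] [NormedSpace ℝ E]
    {ρ : ℝ} (hρ : 0 ≤ ρ) (x u g g' : E) :
    ‖(x + ρ • u) - (x + ρ • g')‖ ≤ ρ * ‖u - g‖ + ρ * ‖g - g'‖ := by
  rw [add_sub_add_left_eq_sub, ← smul_sub, norm_smul, Real.norm_of_nonneg hρ, ← mul_add]
  gcongr
  simpa using norm_sub_le_norm_sub_add_norm_sub u g g'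

theorem sum_range_mul_add_mul_pow_le {s : ℕ → ℝ} (hs : Summable s) (hs0 : ∀ i, 0 ≤ s i)
    {a b q : ℝ} (ha : 0 ≤ a) (hb : 0 ≤ b) (hq0 : 0 ≤ q) (hq1 : q < 1) (k : ℕ) :
    ∑ i ∈ range k, (a * s i + b * q ^ i) ≤ a * ∑' i, s i + b / (1 - q) := by
  have hgeom : ∑ i ∈ range k, q ^ i ≤ 1 / (1 - q) := by
    rw [range_eq_Ico]
    exact (geom_sum_Ico_le_of_lt_one hq0 hq1).trans_eq (by rw [pow_zero])
  rw [sum_add_distrib, ← mul_sum, ← mul_sum, ← mul_one_div b]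
  exact add_le_add (mul_le_mul_of_nonneg_left (Summable.sum_le_tsum _ (fun i _ => hs0 i) hs) ha)
    (mul_le_mul_of_nonneg_left hgeom hb)

theorem dual_iterates_bounded_general (mdim ddim : ℕ) (ρ M q : ℝ) (hρ : 0 < ρ) (hM : 0 ≤ M)
    (hq : q ∈ Set.Ioo (0 : ℝ) 1)
    (α : ℕ → ℝ) (hαsum : Summable fun k => Real.sqrt (α k))
    (G : EuclideanSpace ℝ (Fin ddim) → EuclideanSpace ℝ (Fin mdim) → ℝ)
    (hlipθ : ∀ lam : EuclideanSpace ℝ (Fin mdim), ∀ θ₁ θ₂,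
      ‖gradient (G θ₁) lam - gradient (G θ₂) lam‖ ≤ M * ‖θ₁ - θ₂‖)
    (θ : ℕ → EuclideanSpace ℝ (Fin ddim)) (θs : EuclideanSpace ℝ (Fin ddim))
    (hrate : ∀ k, ‖θ k - θs‖ ≤ q ^ k * ‖θ 0 - θs‖)
    (lamstar : EuclideanSpace ℝ (Fin mdim))
    (hnonexp : ∀ lam₁ lam₂ : EuclideanSpace ℝ (Fin mdim),
      ‖(lam₁ + ρ • gradient (G θs) lam₁) - (lam₂ + ρ • gradient (G θs) lam₂)‖ ≤ ‖lam₁ - lam₂‖)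
    (hfix : lamstar + ρ • gradient (G θs) lamstar = lamstar)
    (lam : ℕ → EuclideanSpace ℝ (Fin mdim)) (u : ℕ → EuclideanSpace ℝ (Fin mdim))
    (hlam0 : lam 0 = 0)
    (hu : ∀ k, ‖u k - gradient (G (θ k)) (lam k)‖ ≤ Real.sqrt (2 * α k / ρ))
    (hstep : ∀ k, lam (k + 1) = lam k + ρ • u k) :
    ∀ k ≥ 1, ‖lam k - lamstar‖ ≤
      Real.sqrt (2 * ρ) * (∑' i, Real.sqrt (α i)) + ρ * M * ‖θ 0 - θs‖ / (1 - q)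
        + ‖lamstar‖ := by
  intro k _
  have herr : ∀ i, ‖lam (i + 1) - (lam i + ρ • gradient (G θs) (lam i))‖ ≤
      Real.sqrt (2 * ρ) * Real.sqrt (α i) + ρ * M * ‖θ 0 - θs‖ * q ^ i := by
    intro i
    have hsqrt : ρ * Real.sqrt (2 * α i / ρ) = Real.sqrt (2 * ρ) * Real.sqrt (α i) := by
      rw [Real.mul_sqrt_div_self hρ.le, ← Real.sqrt_mul (by positivity), mul_left_comm, mul_assoc]
    calc _ ≤ ρ * ‖u i - gradient (G (θ i)) (lam i)‖
          + ρ * ‖gradient (G (θ i)) (lam i) - gradient (G θs) (lam i)‖ := by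
          rw [hstep]; exact norm_add_smul_sub_add_smul_le hρ.le _ _ _ _
      _ ≤ ρ * Real.sqrt (2 * α i / ρ) + ρ * (M * (q ^ i * ‖θ 0 - θs‖)) := by
          gcongr; exacts [hu i, (hlipθ _ _ _).trans (by gcongr; exact hrate i)]
      _ = _ := by rw [hsqrt]; ring
  have hdist := norm_iterate_sub_fixedPoint_le hnonexp hfix herr k
  have hsum := sum_range_mul_add_mul_pow_le hαsum (fun i => Real.sqrt_nonneg _)
    (Real.sqrt_nonneg (2 * ρ)) (by positivity : 0 ≤ ρ * M * ‖θ 0 - θs‖) hq.1.le hq.2 k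
  rw [hlam0, zero_sub, norm_neg] at hdist
  linarith

/-- Boundedness of the dual iterates of the misspecified inexact augmented Lagrangian
scheme: `‖λ_k − λ*‖ ≤ √(2ρ) Σ√α_i + ρM‖θ₀ − θ*‖/(1 − q) + ‖λ*‖` for all `k ≥ 1`. -/
theorem dual_iterates_bounded (mdim ddim : ℕ) (ρ M q : ℝ) (hρ : 0 < ρ) (hM : 0 ≤ M)
    (hq : q ∈ Set.Ioo (0 : ℝ) 1)
    (α : ℕ → ℝ) (hα : ∀ k, 0 ≤ α k) (hαsum : Summable fun k => Real.sqrt (α k))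
    (G : EuclideanSpace ℝ (Fin ddim) → EuclideanSpace ℝ (Fin mdim) → ℝ)
    (hconc : ∀ θ, ConcaveOn ℝ Set.univ (G θ))
    (hdiff : ∀ θ, Differentiable ℝ (G θ))
    (hlip : ∀ θ, ∀ lam₁ lam₂ : EuclideanSpace ℝ (Fin mdim),
      ‖gradient (G θ) lam₁ - gradient (G θ) lam₂‖ ≤ (1 / ρ) * ‖lam₁ - lam₂‖)
    (hlipθ : ∀ lam : EuclideanSpace ℝ (Fin mdim), ∀ θ₁ θ₂,
      ‖gradient (G θ₁) lam - gradient (G θ₂) lam‖ ≤ M * ‖θ₁ - θ₂‖)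
    (θ : ℕ → EuclideanSpace ℝ (Fin ddim)) (θs : EuclideanSpace ℝ (Fin ddim))
    (hrate : ∀ k, ‖θ k - θs‖ ≤ q ^ k * ‖θ 0 - θs‖)
    (lamstar : EuclideanSpace ℝ (Fin mdim))
    (hmax : ∀ lam, G θs lam ≤ G θs lamstar)
    (hnonexp : ∀ lam₁ lam₂ : EuclideanSpace ℝ (Fin mdim),
      ‖(lam₁ + ρ • gradient (G θs) lam₁) - (lam₂ + ρ • gradient (G θs) lam₂)‖ ≤ ‖lam₁ - lam₂‖)
    (hfix : lamstar + ρ • gradient (G θs) lamstar = lamstar)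
    (lam : ℕ → EuclideanSpace ℝ (Fin mdim)) (u : ℕ → EuclideanSpace ℝ (Fin mdim))
    (hlam0 : lam 0 = 0)
    (hu : ∀ k, ‖u k - gradient (G (θ k)) (lam k)‖ ≤ Real.sqrt (2 * α k / ρ))
    (hstep : ∀ k, lam (k + 1) = lam k + ρ • u k) :
    ∀ k ≥ 1, ‖lam k - lamstar‖ ≤
      Real.sqrt (2 * ρ) * (∑' i, Real.sqrt (α i)) + ρ * M * ‖θ 0 - θs‖ / (1 - q)
        + ‖lamstar‖ :=
  dual_iterates_bounded_general mdim ddim ρ M q hρ hM hq α hαsum G hlipθ θ θs hrate lamstar hnonexp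
    hfix lam u hlam0 hu hstep
end

section
/- Let g : R^m → R be concave differentiable with (1/ρ)-Lipschitz gradient, attaining its maximum value f* at λ*. Let a sequence satisfy λ_{i+1} = λ_i + ρ(∇g(λ_i) + e_i) with λ₀ = 0, where the error satisfies ‖e_i‖ ≤ ε_i. If ‖λ_{i+1} − λ*‖ ≤ C for all i, then for every k ≥ 1 the averaged point λ̄_k := (1/k)Σ_{i=1}^k λ_i satisfies f* − g(λ̄_k) ≤ (1/k)[ ‖λ*‖²/(2ρ) + C Σ_{i=0}^{k−1} ε_i ]. -/
/-!
Concavity of `g` at `λ` and the descent inequality of the `(1/ρ)`-smooth `g` combine, for one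
step `λ' = λ + ρ (∇g(λ) + e)` and any point `z`, into
`g z - g λ' ≤ (‖λ - z‖² - ‖λ' - z‖²) / (2ρ) + ⟪e, λ' - z⟫`,
whose error term is at most `C ε` by Cauchy–Schwarz. Summing over the first `k` steps telescopes
the distances, and Jensen's inequality for the concave `g` bounds `g` at the average iterate from
below by the average of the values.
-/

open Finset RealInnerProductSpace
open scoped Gradient

theorem ConcaveOn.average_le_map_average {F ι : Type*} [AddCommGroup F] [Module ℝ F]
    {f : F → ℝ} {s : Set F} (hf : ConcaveOn ℝ s f) {t : Finset ι} (ht : t.Nonempty)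
    {p : ι → F} (hp : ∀ i ∈ t, p i ∈ s) :
    (#t : ℝ)⁻¹ * ∑ i ∈ t, f (p i) ≤ f ((#t : ℝ)⁻¹ • ∑ i ∈ t, p i) := by
  simpa [Finset.centerMass, Finset.mul_sum] using
    hf.le_map_centerMass (w := fun _ => 1) (fun _ _ => zero_le_one) (by simpa using ht) hp

section

variable {E : Type*} [NormedAddCommGroup E] [InnerProductSpace ℝ E] [CompleteSpace E]
  {g : E → ℝ}

theorem DifferentiableAt.hasDerivAt_comp_add_smul {x v : E} {t : ℝ}
    (hg : DifferentiableAt ℝ g (x + t • v)) :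
    HasDerivAt (fun s : ℝ => g (x + s • v)) ⟪∇ g (x + t • v), v⟫ t := by
  have hline : HasDerivAt (fun s : ℝ => x + s • v) v t := by
    simpa using ((hasDerivAt_id t).smul_const v).const_add x
  exact (hasGradientAt_iff_hasFDerivAt.mp hg.hasGradientAt).comp_hasDerivAt t hline

theorem ConcaveOn.le_add_inner_gradient {s : Set E} (hg : ConcaveOn ℝ s g) {x z : E}
    (hx : x ∈ s) (hz : z ∈ s) (hgx : DifferentiableAt ℝ g x) :
    g z ≤ g x + ⟪∇ g x, z - x⟫ := by
  have hline : ConcaveOn ℝ (AffineMap.lineMap x z ⁻¹' s) fun t : ℝ => g (x + t • (z - x)) := by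
    have hcomp : g ∘ AffineMap.lineMap x z = fun t : ℝ => g (x + t • (z - x)) := by
      ext t
      simp [AffineMap.lineMap_apply_module', add_comm]
    exact hcomp ▸ hg.comp_affineMap (AffineMap.lineMap x z)
  have hderiv : HasDerivAt (fun t : ℝ => g (x + t • (z - x))) ⟪∇ g x, z - x⟫ 0 := by
    simpa using (show DifferentiableAt ℝ g (x + (0 : ℝ) • (z - x)) by simpa using hgx)
      |>.hasDerivAt_comp_add_smul
  have hslope := hline.slope_le_of_hasDerivAt (by simpa using hx) (by simpa using hz) one_pos
    hderiv
  rw [slope_def_field] at hslope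
  simp only [zero_smul, add_zero, sub_zero, one_smul, add_sub_cancel, div_one] at hslope
  linarith

theorem Differentiable.add_inner_gradient_sub_le {L : ℝ} (hg : Differentiable ℝ g)
    (hL : ∀ a b, ‖∇ g a - ∇ g b‖ ≤ L * ‖a - b‖) (x y : E) :
    g x + ⟪∇ g x, y - x⟫ - L / 2 * ‖y - x‖ ^ 2 ≤ g y := by
  set v := y - x with hv
  set η : ℝ → ℝ := fun t => g (x + t • v) - t * ⟪∇ g x, v⟫ + L / 2 * ‖v‖ ^ 2 * t ^ 2
  have hη : ∀ t, HasDerivAt η (⟪∇ g (x + t • v) - ∇ g x, v⟫ + L * ‖v‖ ^ 2 * t) t := by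
    intro t
    refine (((hg _).hasDerivAt_comp_add_smul.sub ((hasDerivAt_id t).mul_const ⟪∇ g x, v⟫)).add
      ((hasDerivAt_pow 2 t).const_mul (L / 2 * ‖v‖ ^ 2))).congr_deriv ?_
    rw [inner_sub_left]
    ring
  have hη_nonneg : ∀ t, 0 ≤ t → 0 ≤ ⟪∇ g (x + t • v) - ∇ g x, v⟫ + L * ‖v‖ ^ 2 * t := by
    intro t ht
    have hlip : ‖∇ g (x + t • v) - ∇ g x‖ ≤ L * t * ‖v‖ := by
      simpa [norm_smul, abs_of_nonneg ht, mul_assoc] using hL (x + t • v) x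
    have hcs := neg_le_of_abs_le (abs_real_inner_le_norm (∇ g (x + t • v) - ∇ g x) v)
    nlinarith [mul_le_mul_of_nonneg_right hlip (norm_nonneg v)]
  have hmono : MonotoneOn η (Set.Icc 0 1) :=
    monotoneOn_of_hasDerivWithinAt_nonneg (convex_Icc 0 1)
      (fun t _ => (hη t).continuousAt.continuousWithinAt) (fun t _ => (hη t).hasDerivWithinAt)
      (fun t ht => hη_nonneg t (interior_subset ht).1)
  have h01 : η 0 ≤ η 1 := hmono (by simp) (by simp) zero_le_one
  simp only [η, zero_smul, add_zero, zero_mul, sub_zero, one_smul, one_mul, one_pow, mul_one,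
    hv, add_sub_cancel] at h01
  linarith

variable {ρ : ℝ}

theorem ConcaveOn.sub_le_of_inexact_gradient_step (hconc : ConcaveOn ℝ Set.univ g)
    (hg : Differentiable ℝ g) (hρ : 0 < ρ) (hL : ∀ a b, ‖∇ g a - ∇ g b‖ ≤ 1 / ρ * ‖a - b‖)
    {x y e : E} (hy : y = x + ρ • (∇ g x + e)) (z : E) :
    g z - g y ≤ (‖x - z‖ ^ 2 - ‖y - z‖ ^ 2) / (2 * ρ) + ⟪e, y - z⟫ := by
  have hconcave := hconc.le_add_inner_gradient (Set.mem_univ x) (Set.mem_univ z) (hg x)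
  have hdescent := hg.add_inner_gradient_sub_le hL x y
  have hgrad : ∇ g x = ρ⁻¹ • (y - x) - e := by
    rw [hy, add_sub_cancel_left, smul_smul, inv_mul_cancel₀ hρ.ne', one_smul, add_sub_cancel_right]
  have hsplit : ⟪∇ g x, z - x⟫ - ⟪∇ g x, y - x⟫ = ρ⁻¹ * ⟪y - x, z - y⟫ + ⟪e, y - z⟫ := by
    rw [← inner_sub_right, sub_sub_sub_cancel_right, hgrad, inner_sub_left, real_inner_smul_left,
      ← neg_sub y z, inner_neg_right, inner_neg_right]
    ring
  have hthree_point : ‖x - z‖ ^ 2 - ‖y - z‖ ^ 2 = ‖y - x‖ ^ 2 + 2 * ⟪y - x, z - y⟫ := by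
    rw [show x - z = (y - z) - (y - x) by abel, norm_sub_sq_real, ← neg_sub z y,
      real_inner_comm, inner_neg_right]
    ring
  have hdiv : (‖x - z‖ ^ 2 - ‖y - z‖ ^ 2) / (2 * ρ) =
      1 / ρ / 2 * ‖y - x‖ ^ 2 + ρ⁻¹ * ⟪y - x, z - y⟫ := by
    rw [hthree_point]
    field_simp
  linarith

theorem ConcaveOn.sum_sub_le_of_inexact_gradient_ascent (hconc : ConcaveOn ℝ Set.univ g)
    (hg : Differentiable ℝ g) (hρ : 0 < ρ) (hL : ∀ a b, ‖∇ g a - ∇ g b‖ ≤ 1 / ρ * ‖a - b‖)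
    {lam e : ℕ → E} {ε : ℕ → ℝ} {C : ℝ} {z : E}
    (hstep : ∀ i, lam (i + 1) = lam i + ρ • (∇ g (lam i) + e i)) (herr : ∀ i, ‖e i‖ ≤ ε i)
    (hbound : ∀ i, ‖lam (i + 1) - z‖ ≤ C) (k : ℕ) :
    ∑ i ∈ range k, (g z - g (lam (i + 1))) ≤
      ‖lam 0 - z‖ ^ 2 / (2 * ρ) + C * ∑ i ∈ range k, ε i := by
  have hstep_le (i : ℕ) : g z - g (lam (i + 1)) ≤
      (‖lam i - z‖ ^ 2 - ‖lam (i + 1) - z‖ ^ 2) / (2 * ρ) + C * ε i := by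
    have herr_inner : ⟪e i, lam (i + 1) - z⟫ ≤ C * ε i :=
      calc ⟪e i, lam (i + 1) - z⟫ ≤ ‖e i‖ * ‖lam (i + 1) - z‖ := real_inner_le_norm _ _
        _ ≤ ε i * C :=
          mul_le_mul (herr i) (hbound i) (norm_nonneg _) ((norm_nonneg _).trans (herr i))
        _ = C * ε i := mul_comm _ _
    linarith [hconc.sub_le_of_inexact_gradient_step hg hρ hL (hstep i) z]
  calc ∑ i ∈ range k, (g z - g (lam (i + 1)))
      ≤ ∑ i ∈ range k, ((‖lam i - z‖ ^ 2 - ‖lam (i + 1) - z‖ ^ 2) / (2 * ρ) + C * ε i) :=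
        sum_le_sum fun i _ => hstep_le i
    _ = (‖lam 0 - z‖ ^ 2 - ‖lam k - z‖ ^ 2) / (2 * ρ) + C * ∑ i ∈ range k, ε i := by
        rw [sum_add_distrib, ← sum_div, sum_range_sub' (fun i => ‖lam i - z‖ ^ 2), ← mul_sum]
    _ ≤ ‖lam 0 - z‖ ^ 2 / (2 * ρ) + C * ∑ i ∈ range k, ε i := by
        gcongr
        exact sub_le_self _ (sq_nonneg _)

end

theorem inexact_gradient_ascent_averaged_suboptimality_general (m : ℕ) (ρ C : ℝ) (hρ : 0 < ρ)
    (g : EuclideanSpace ℝ (Fin m) → ℝ)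
    (hconc : ConcaveOn ℝ Set.univ g) (hdiff : Differentiable ℝ g)
    (hlip : ∀ a b : EuclideanSpace ℝ (Fin m),
      ‖gradient g a - gradient g b‖ ≤ (1 / ρ) * ‖a - b‖)
    (lamstar : EuclideanSpace ℝ (Fin m)) (fstar : ℝ)
    (hfstar : fstar = g lamstar)
    (lam : ℕ → EuclideanSpace ℝ (Fin m)) (e : ℕ → EuclideanSpace ℝ (Fin m)) (ε : ℕ → ℝ)
    (hlam0 : lam 0 = 0)
    (hstep : ∀ i, lam (i + 1) = lam i + ρ • (gradient g (lam i) + e i))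
    (herr : ∀ i, ‖e i‖ ≤ ε i)
    (hbound : ∀ i, ‖lam (i + 1) - lamstar‖ ≤ C)
    (k : ℕ) (hk : 1 ≤ k) :
    fstar - g ((k : ℝ)⁻¹ • ∑ i ∈ Finset.Icc 1 k, lam i) ≤
      (1 / k) * (‖lamstar‖ ^ 2 / (2 * ρ) + C * ∑ i ∈ Finset.range k, ε i) := by
  subst hfstar
  have hk_pos : (0 : ℝ) < k := by exact_mod_cast hk
  have hreindex : ∑ i ∈ Icc 1 k, lam i = ∑ i ∈ range k, lam (i + 1) := by
    rw [← Ico_add_one_right_eq_Icc, sum_Ico_eq_sum_range, add_tsub_cancel_right]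
    simp only [add_comm 1]
  have hjensen := hconc.average_le_map_average
    (nonempty_range_iff.mpr (Nat.one_le_iff_ne_zero.mp hk)) (p := fun i => lam (i + 1))
    fun i _ => Set.mem_univ _
  have hsum := hconc.sum_sub_le_of_inexact_gradient_ascent hdiff hρ hlip hstep herr hbound k
  rw [card_range] at hjensen
  rw [sum_sub_distrib, sum_const, card_range, nsmul_eq_mul, hlam0, zero_sub, norm_neg] at hsum
  rw [hreindex, one_div]
  calc g lamstar - g ((k : ℝ)⁻¹ • ∑ i ∈ range k, lam (i + 1))
      ≤ (k : ℝ)⁻¹ * (k * g lamstar - ∑ i ∈ range k, g (lam (i + 1))) := by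
        rw [mul_sub, inv_mul_cancel_left₀ hk_pos.ne']
        linarith
    _ ≤ (k : ℝ)⁻¹ * (‖lamstar‖ ^ 2 / (2 * ρ) + C * ∑ i ∈ range k, ε i) := by gcongr

/-- Dual suboptimality of inexact gradient ascent with stepsize `ρ` on a `(1/ρ)`-smooth
concave function: `f* − g(λ̄_k) ≤ (1/k)[‖λ*‖²/(2ρ) + C Σ_{i=0}^{k−1} ε_i]`. -/
theorem inexact_gradient_ascent_averaged_suboptimality (m : ℕ) (ρ C : ℝ) (hρ : 0 < ρ)
    (g : EuclideanSpace ℝ (Fin m) → ℝ)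
    (hconc : ConcaveOn ℝ Set.univ g) (hdiff : Differentiable ℝ g)
    (hlip : ∀ a b : EuclideanSpace ℝ (Fin m),
      ‖gradient g a - gradient g b‖ ≤ (1 / ρ) * ‖a - b‖)
    (lamstar : EuclideanSpace ℝ (Fin m)) (fstar : ℝ)
    (hfstar : fstar = g lamstar) (hmax : ∀ lam, g lam ≤ g lamstar)
    (lam : ℕ → EuclideanSpace ℝ (Fin m)) (e : ℕ → EuclideanSpace ℝ (Fin m)) (ε : ℕ → ℝ)
    (hlam0 : lam 0 = 0)
    (hstep : ∀ i, lam (i + 1) = lam i + ρ • (gradient g (lam i) + e i))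
    (herr : ∀ i, ‖e i‖ ≤ ε i)
    (hbound : ∀ i, ‖lam (i + 1) - lamstar‖ ≤ C)
    (k : ℕ) (hk : 1 ≤ k) :
    fstar - g ((k : ℝ)⁻¹ • ∑ i ∈ Finset.Icc 1 k, lam i) ≤
      (1 / k) * (‖lamstar‖ ^ 2 / (2 * ρ) + C * ∑ i ∈ Finset.range k, ε i) :=
  inexact_gradient_ascent_averaged_suboptimality_general m ρ C hρ g hconc hdiff hlip lamstar fstar
    hfstar lam e ε hlam0 hstep herr hbound k hk
end

section
/- Let ρ > 0, X ⊆ R^n, f : X → R, h : X → R^m, and define L_ρ(x, λ) := f(x) + (ρ/2) d²(λ/ρ + h(x), R^m_−) − ‖λ‖²/(2ρ). Suppose x_i ∈ X satisfies L_ρ(x_i, λ_i) ≤ L_ρ(x*, λ_i) + α_i for a point x* with h(x*) ≤ 0, and set λ_{i+1} := λ_i + ρ∇_λ L_ρ(x_i, λ_i), which satisfies d(h(x_i) + λ_i/ρ, R^m_−) = ‖λ_{i+1}‖/ρ. Then f(x_i) − f(x*) ≤ (1/(2ρ))(‖λ_i‖² − ‖λ_{i+1}‖²) + α_i. -/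
open Metric

/- At a feasible point `x*` the penalty `(ρ/2) d²(λ/ρ + h x*, ℝ^m_−)` is at most `‖λ‖²/(2ρ)`, so
`L_ρ(x*, λ) ≤ f(x*)`; at `x_i` the multiplier update turns the penalty into exactly
`‖λ_{i+1}‖²/(2ρ)`. Subtracting the two evaluations in the inexact-minimality inequality gives
the claim. -/

theorem infDist_add_le_norm_of_mem {E : Type*} [SeminormedAddCommGroup E] {s : Set E} {y : E}
    (hy : y ∈ s) (v : E) : infDist (v + y) s ≤ ‖v‖ :=
  calc infDist (v + y) s ≤ dist (v + y) y := infDist_le_dist_of_mem hy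
    _ = ‖v‖ := by rw [dist_eq_norm, add_sub_cancel_right]

theorem half_mul_sq_div_self {ρ : ℝ} (hρ : ρ ≠ 0) (a : ℝ) :
    ρ / 2 * (a / ρ) ^ 2 = a ^ 2 / (2 * ρ) := by
  field_simp

theorem half_mul_sq_infDist_smul_add_le {E : Type*} [SeminormedAddCommGroup E]
    [NormedSpace ℝ E] {s : Set E} {y : E} (hy : y ∈ s) {ρ : ℝ} (hρ : 0 < ρ) (μ : E) :
    ρ / 2 * infDist (ρ⁻¹ • μ + y) s ^ 2 ≤ ‖μ‖ ^ 2 / (2 * ρ) := by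
  have hdist : infDist (ρ⁻¹ • μ + y) s ≤ ‖μ‖ / ρ := by
    calc infDist (ρ⁻¹ • μ + y) s ≤ ‖ρ⁻¹ • μ‖ := infDist_add_le_norm_of_mem hy _
      _ = ‖μ‖ / ρ := by rw [norm_smul, norm_inv, Real.norm_of_nonneg hρ.le, inv_mul_eq_div]
  rw [← half_mul_sq_div_self hρ.ne']
  gcongr
  exact infDist_nonneg

theorem one_step_primal_suboptimality_general (n m : ℕ) (ρ : ℝ) (hρ : 0 < ρ)
    (f : EuclideanSpace ℝ (Fin n) → ℝ)
    (h : EuclideanSpace ℝ (Fin n) → EuclideanSpace ℝ (Fin m))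
    (L : EuclideanSpace ℝ (Fin n) → EuclideanSpace ℝ (Fin m) → ℝ)
    (hL : ∀ x lam, L x lam = f x +
      ρ / 2 * (Metric.infDist (ρ⁻¹ • lam + h x)
        {v : EuclideanSpace ℝ (Fin m) | ∀ i, v i ≤ 0}) ^ 2 - ‖lam‖ ^ 2 / (2 * ρ))
    (xi xstar : EuclideanSpace ℝ (Fin n))
    (hfeas : ∀ j, h xstar j ≤ 0)
    (lami lami1 : EuclideanSpace ℝ (Fin m)) (αi : ℝ)
    (hinexact : L xi lami ≤ L xstar lami + αi)
    (hupdate : Metric.infDist (h xi + ρ⁻¹ • lami)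
        {v : EuclideanSpace ℝ (Fin m) | ∀ i, v i ≤ 0} = ‖lami1‖ / ρ) :
    f xi - f xstar ≤ (1 / (2 * ρ)) * (‖lami‖ ^ 2 - ‖lami1‖ ^ 2) + αi := by
  have hstar := half_mul_sq_infDist_smul_add_le
    (s := {v : EuclideanSpace ℝ (Fin m) | ∀ i, v i ≤ 0}) hfeas hρ lami
  have hi : ρ / 2 * infDist (ρ⁻¹ • lami + h xi)
      {v : EuclideanSpace ℝ (Fin m) | ∀ i, v i ≤ 0} ^ 2 = ‖lami1‖ ^ 2 / (2 * ρ) := by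
    rw [add_comm, hupdate, half_mul_sq_div_self hρ.ne']
  rw [hL, hL, hi] at hinexact
  rw [one_div_mul_eq_div, sub_div]
  linarith

/-- One-step primal suboptimality inequality of the augmented Lagrangian method:
if `x_i` minimizes `L_ρ(·, λ_i)` within `α_i` relative to a feasible `x*`, and
`λ_{i+1}` satisfies `d(h(x_i) + λ_i/ρ, ℝ^m_−) = ‖λ_{i+1}‖/ρ`, then
`f(x_i) − f(x*) ≤ (1/(2ρ))(‖λ_i‖² − ‖λ_{i+1}‖²) + α_i`. -/
theorem one_step_primal_suboptimality (n m : ℕ) (ρ : ℝ) (hρ : 0 < ρ)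
    (X : Set (EuclideanSpace ℝ (Fin n)))
    (f : EuclideanSpace ℝ (Fin n) → ℝ)
    (h : EuclideanSpace ℝ (Fin n) → EuclideanSpace ℝ (Fin m))
    (L : EuclideanSpace ℝ (Fin n) → EuclideanSpace ℝ (Fin m) → ℝ)
    (hL : ∀ x lam, L x lam = f x +
      ρ / 2 * (Metric.infDist (ρ⁻¹ • lam + h x)
        {v : EuclideanSpace ℝ (Fin m) | ∀ i, v i ≤ 0}) ^ 2 - ‖lam‖ ^ 2 / (2 * ρ))
    (xi xstar : EuclideanSpace ℝ (Fin n)) (hxi : xi ∈ X) (hxstar : xstar ∈ X)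
    (hfeas : ∀ j, h xstar j ≤ 0)
    (lami lami1 : EuclideanSpace ℝ (Fin m)) (αi : ℝ)
    (hinexact : L xi lami ≤ L xstar lami + αi)
    (hupdate : Metric.infDist (h xi + ρ⁻¹ • lami)
        {v : EuclideanSpace ℝ (Fin m) | ∀ i, v i ≤ 0} = ‖lami1‖ / ρ) :
    f xi - f xstar ≤ (1 / (2 * ρ)) * (‖lami‖ ^ 2 - ‖lami1‖ ^ 2) + αi :=
  one_step_primal_suboptimality_general n m ρ hρ f h L hL xi xstar hfeas lami lami1 αi hinexact
    hupdate
end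

section
/- Let f be convex on a convex set X, h : R^n → R^m, λ* ∈ R^m_+, ρ > 0, and suppose f* = min_{x ∈ X} L_ρ(x, λ*) where L_ρ(x, λ) := f(x) + (ρ/2) d²(h(x) + λ/ρ, R^m_−) − ‖λ‖²/(2ρ). Then for every x̄ ∈ X, f(x̄) − f* ≥ −(ρ/2) d²(h(x̄), R^m_−) − ‖λ*‖ · d(h(x̄), R^m_−). -/
/-- Primal suboptimality lower bound: if `f* = min_{x ∈ X} L_ρ(x, λ*)` with `λ* ≥ 0`, then for
every `x̄ ∈ X`, `f(x̄) − f* ≥ −(ρ/2) d²(h(x̄), ℝ^m_−) − ‖λ*‖ d(h(x̄), ℝ^m_−)`. -/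
theorem primal_suboptimality_lower_bound (n m : ℕ) (ρ : ℝ) (hρ : 0 < ρ)
    (X : Set (EuclideanSpace ℝ (Fin n))) (hXconv : Convex ℝ X)
    (f : EuclideanSpace ℝ (Fin n) → ℝ) (hfconv : ConvexOn ℝ X f)
    (h : EuclideanSpace ℝ (Fin n) → EuclideanSpace ℝ (Fin m))
    (lamstar : EuclideanSpace ℝ (Fin m)) (hlamstar : ∀ i, 0 ≤ lamstar i)
    (L : EuclideanSpace ℝ (Fin n) → EuclideanSpace ℝ (Fin m) → ℝ)
    (hL : ∀ x lam, L x lam = f x +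
      ρ / 2 * (Metric.infDist (h x + ρ⁻¹ • lam)
        {v : EuclideanSpace ℝ (Fin m) | ∀ i, v i ≤ 0}) ^ 2 - ‖lam‖ ^ 2 / (2 * ρ))
    (fstar : ℝ) (hmin : IsLeast ((fun x => L x lamstar) '' X) fstar)
    (xbar : EuclideanSpace ℝ (Fin n)) (hxbar : xbar ∈ X) :
    f xbar - fstar ≥
      -(ρ / 2) * (Metric.infDist (h xbar)
          {v : EuclideanSpace ℝ (Fin m) | ∀ i, v i ≤ 0}) ^ 2
        - ‖lamstar‖ * Metric.infDist (h xbar)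
          {v : EuclideanSpace ℝ (Fin m) | ∀ i, v i ≤ 0} := by
  set S := {v : EuclideanSpace ℝ (Fin m) | ∀ i, v i ≤ 0} with hS
  have h1 : fstar ≤ L xbar lamstar := hmin.2 ⟨xbar, hxbar, rfl⟩
  rw [hL] at h1
  set d := Metric.infDist (h xbar) S with hd
  set D := Metric.infDist (h xbar + ρ⁻¹ • lamstar) S with hD
  have hdnn : 0 ≤ d := Metric.infDist_nonneg
  have hDnn : 0 ≤ D := Metric.infDist_nonneg
  have htri : D ≤ d + ρ⁻¹ * ‖lamstar‖ := by
    have := Metric.infDist_le_infDist_add_dist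
      (x := h xbar + ρ⁻¹ • lamstar) (y := h xbar) (s := S)
    have hdist : dist (h xbar + ρ⁻¹ • lamstar) (h xbar) = ρ⁻¹ * ‖lamstar‖ := by
      rw [dist_eq_norm]
      simp only [add_sub_cancel_left, norm_smul, Real.norm_eq_abs, abs_of_pos (inv_pos.mpr hρ)]
    linarith [hdist ▸ this]
  have hsq : D ^ 2 ≤ (d + ρ⁻¹ * ‖lamstar‖) ^ 2 := by
    apply pow_le_pow_left₀ hDnn htri
  have hnorm : 0 ≤ ‖lamstar‖ := norm_nonneg _
  have hρ' : ρ ≠ 0 := ne_of_gt hρ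
  have key : (d + ρ⁻¹ * ‖lamstar‖) ^ 2 * (ρ / 2) - ‖lamstar‖ ^ 2 / (2 * ρ)
      = ρ / 2 * d ^ 2 + ‖lamstar‖ * d := by
    field_simp
    ring
  nlinarith [hsq, key, hρ]
end
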